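/- Every sign symmetric P_0-matrix B : Matrix (Fin n) (Fin n) ℝ all of whose diagonal entries are zero is the zero matrix. -/

import Mathlib

/-! With a zero diagonal, the principal minor on `{i, j}` is `-(B i j * B j i)`, so the
P₀ condition forces `B i j * B j i ≤ 0`; sign symmetry then leaves only `B i j = B j i = 0`. -/

namespace SSP

/-- The principal minor of `B` on the index set `S`: the determinant of the
S×S principal submatrix of `B`. -/
def pMinor {n : ℕ} (B : Matrix (Fin n) (Fin n) ℝ) (S : Finset (Fin n)) : ℝ :=
  (B.submatrix (fun i : {x // x ∈ S} => (i : Fin n))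
               (fun j : {x // x ∈ S} => (j : Fin n))).det

/-- `B` is sign symmetric: for all `i ≠ j`, twin entries have a positive product
or are both zero. -/
def SignSym {n : ℕ} (B : Matrix (Fin n) (Fin n) ℝ) : Prop :=
  ∀ i j : Fin n, i ≠ j → (0 < B i j * B j i ∨ (B i j = 0 ∧ B j i = 0))

/-- `B` is a P₀-matrix: every principal minor is nonnegative. -/
def IsP0 {n : ℕ} (B : Matrix (Fin n) (Fin n) ℝ) : Prop :=
  ∀ S : Finset (Fin n), S.Nonempty → 0 ≤ pMinor B S

/-- `B` is a P-matrix: every principal minor is positive. -/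
def IsP {n : ℕ} (B : Matrix (Fin n) (Fin n) ℝ) : Prop :=
  ∀ S : Finset (Fin n), S.Nonempty → 0 < pMinor B S

/-- `B` is a P₀⁺-matrix: for every `k ∈ {1,…,n}`, every size-`k` principal
minor is nonnegative and at least one size-`k` principal minor is positive. -/
def IsP0plus {n : ℕ} (B : Matrix (Fin n) (Fin n) ℝ) : Prop :=
  ∀ k : ℕ, 1 ≤ k → k ≤ n →
    ((∀ S : Finset (Fin n), S.card = k → 0 ≤ pMinor B S) ∧
     (∃ S : Finset (Fin n), S.card = k ∧ 0 < pMinor B S))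

/-- `B` is a P₀₁⁺-matrix: a P₀⁺-matrix with positive diagonal entries. -/
def IsP01plus {n : ℕ} (B : Matrix (Fin n) (Fin n) ℝ) : Prop :=
  IsP0plus B ∧ ∀ i : Fin n, 0 < B i i

/-- `B` is a P₀₁-matrix: a P₀-matrix with positive diagonal entries. -/
def IsP01 {n : ℕ} (B : Matrix (Fin n) (Fin n) ℝ) : Prop :=
  IsP0 B ∧ ∀ i : Fin n, 0 < B i i

/-- Every specified diagonal entry of the partial matrix `A` (specifying the
digraph `D`) is positive. -/
def PartialDiagPos {n : ℕ} (D : Fin n → Fin n → Prop)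
    (A : Matrix (Fin n) (Fin n) ℝ) : Prop :=
  ∀ i : Fin n, D i i → 0 < A i i

/-- Fully specified twin entries of the partial matrix `A` have positive
product or are both zero. -/
def PartialTwin {n : ℕ} (D : Fin n → Fin n → Prop)
    (A : Matrix (Fin n) (Fin n) ℝ) : Prop :=
  ∀ i j : Fin n, i ≠ j → D i j → D j i →
    (0 < A i j * A j i ∨ (A i j = 0 ∧ A j i = 0))

/-- Every fully specified principal minor of the partial matrix `A` is
nonnegative. -/
def PartialMinorsNonneg {n : ℕ} (D : Fin n → Fin n → Prop)
    (A : Matrix (Fin n) (Fin n) ℝ) : Prop :=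
  ∀ S : Finset (Fin n), S.Nonempty → (∀ i ∈ S, ∀ j ∈ S, D i j) → 0 ≤ pMinor A S

/-- Every fully specified principal minor of the partial matrix `A` is
positive. -/
def PartialMinorsPos {n : ℕ} (D : Fin n → Fin n → Prop)
    (A : Matrix (Fin n) (Fin n) ℝ) : Prop :=
  ∀ S : Finset (Fin n), S.Nonempty → (∀ i ∈ S, ∀ j ∈ S, D i j) → 0 < pMinor A S

/-- `B` is a completion of the partial matrix `A` specifying `D`. -/
def Completes {n : ℕ} (D : Fin n → Fin n → Prop)
    (A B : Matrix (Fin n) (Fin n) ℝ) : Prop :=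
  ∀ i j : Fin n, D i j → B i j = A i j

/-- `A` is a partial sign symmetric P₀₁⁺-matrix specifying `D`. -/
def PartSSP01plus {n : ℕ} (D : Fin n → Fin n → Prop)
    (A : Matrix (Fin n) (Fin n) ℝ) : Prop :=
  PartialDiagPos D A ∧ PartialTwin D A ∧ PartialMinorsNonneg D A

/-- `A` is a partial sign symmetric P₀₁-matrix specifying `D`. -/
def PartSSP01 {n : ℕ} (D : Fin n → Fin n → Prop)
    (A : Matrix (Fin n) (Fin n) ℝ) : Prop :=
  PartialDiagPos D A ∧ PartialTwin D A ∧ PartialMinorsNonneg D A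

/-- `A` is a partial sign symmetric P₀-matrix specifying `D`. -/
def PartSSP0 {n : ℕ} (D : Fin n → Fin n → Prop)
    (A : Matrix (Fin n) (Fin n) ℝ) : Prop :=
  PartialTwin D A ∧ PartialMinorsNonneg D A

/-- `A` is a partial sign symmetric P₀⁺-matrix specifying `D`. -/
def PartSSP0plus {n : ℕ} (D : Fin n → Fin n → Prop)
    (A : Matrix (Fin n) (Fin n) ℝ) : Prop :=
  PartialTwin D A ∧ PartialMinorsNonneg D A

/-- `A` is a partial sign symmetric P-matrix specifying `D`. -/
def PartSSP {n : ℕ} (D : Fin n → Fin n → Prop)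
    (A : Matrix (Fin n) (Fin n) ℝ) : Prop :=
  PartialTwin D A ∧ PartialMinorsPos D A

/-- `D` has sign symmetric P₀₁⁺-completion. -/
def HasSSP01plusCompletion {n : ℕ} (D : Fin n → Fin n → Prop) : Prop :=
  ∀ A : Matrix (Fin n) (Fin n) ℝ, PartSSP01plus D A →
    ∃ B : Matrix (Fin n) (Fin n) ℝ, Completes D A B ∧ SignSym B ∧ IsP01plus B

/-- `D` has sign symmetric P₀₁-completion. -/
def HasSSP01Completion {n : ℕ} (D : Fin n → Fin n → Prop) : Prop :=
  ∀ A : Matrix (Fin n) (Fin n) ℝ, PartSSP01 D A →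
    ∃ B : Matrix (Fin n) (Fin n) ℝ, Completes D A B ∧ SignSym B ∧ IsP01 B

/-- `D` has sign symmetric P₀-completion. -/
def HasSSP0Completion {n : ℕ} (D : Fin n → Fin n → Prop) : Prop :=
  ∀ A : Matrix (Fin n) (Fin n) ℝ, PartSSP0 D A →
    ∃ B : Matrix (Fin n) (Fin n) ℝ, Completes D A B ∧ SignSym B ∧ IsP0 B

/-- `D` has sign symmetric P₀⁺-completion. -/
def HasSSP0plusCompletion {n : ℕ} (D : Fin n → Fin n → Prop) : Prop :=
  ∀ A : Matrix (Fin n) (Fin n) ℝ, PartSSP0plus D A →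
    ∃ B : Matrix (Fin n) (Fin n) ℝ, Completes D A B ∧ SignSym B ∧ IsP0plus B

/-- `D` has sign symmetric P-completion. -/
def HasSSPCompletion {n : ℕ} (D : Fin n → Fin n → Prop) : Prop :=
  ∀ A : Matrix (Fin n) (Fin n) ℝ, PartSSP D A →
    ∃ B : Matrix (Fin n) (Fin n) ℝ, Completes D A B ∧ SignSym B ∧ IsP B

section

variable {n : ℕ} {B : Matrix (Fin n) (Fin n) ℝ}

theorem pMinor_pair {i j : Fin n} (hij : i ≠ j) :
    pMinor B {i, j} = B i i * B j j - B i j * B j i := by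
  have hi : i ∈ ({i, j} : Finset (Fin n)) := Finset.mem_insert_self i {j}
  have hj : j ∈ ({i, j} : Finset (Fin n)) :=
    Finset.mem_insert_of_mem (Finset.mem_singleton_self j)
  let e : Fin 2 ≃ ({i, j} : Finset (Fin n)) :=
    { toFun := ![⟨i, hi⟩, ⟨j, hj⟩]
      invFun := fun x => if (x : Fin n) = i then 0 else 1
      left_inv := by
        intro k
        fin_cases k <;> simp [hij.symm]
      right_inv := by
        rintro ⟨x, hx⟩
        rcases Finset.mem_insert.mp hx with rfl | hx
        · simp
        · obtain rfl := Finset.mem_singleton.mp hx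
          simp [hij.symm] }
  rw [pMinor, ← Matrix.det_submatrix_equiv_self e, Matrix.det_fin_two]
  simp [e]

theorem IsP0.mul_le_mul_diag (hP0 : IsP0 B) {i j : Fin n} (hij : i ≠ j) :
    B i j * B j i ≤ B i i * B j j := by
  have h := hP0 {i, j} (Finset.insert_nonempty i {j})
  rw [pMinor_pair hij] at h
  linarith

theorem SignSym.eq_zero_of_mul_nonpos (hss : SignSym B) {i j : Fin n} (hij : i ≠ j)
    (h : B i j * B j i ≤ 0) : B i j = 0 :=
  (hss i j hij).resolve_left h.not_gt |>.1

end

/-- A sign symmetric P₀-matrix with zero diagonal is the zero matrix. -/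
theorem zero_diag_sign_symmetric_P0_eq_zero {n : ℕ}
    (B : Matrix (Fin n) (Fin n) ℝ) (hss : SignSym B) (hP0 : IsP0 B)
    (hdiag : ∀ i : Fin n, B i i = 0) :
    B = 0 := by
  ext i j
  rcases eq_or_ne i j with rfl | hij
  · exact hdiag i
  · refine hss.eq_zero_of_mul_nonpos hij ?_
    simpa [hdiag] using hP0.mul_le_mul_diag hij

end SSP
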